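/- arXiv:math/0301347 — 3 statements merged into one kernel-verified Lean document; each statement's English description precedes it below -/
import Mathlib

section
/- Let (C,e) be a Morita context with A = eCe, B = e'Ce', M = e'Ce, N = eCe'. The following conditions are equivalent: (1) e is a Morita idempotent (i.e. CeC = C); (2) the multiplication map μ_e : Ce ⊗_{eCe} eC → C is an epimorphism of C-bimodules, and in that case it is an isomorphism; (3) the multiplication map f : N ⊗_A M = e'Ce ⊗_{eCe} eCe' → e'Ce' = B is an epimorphism of B-bimodules, and in that case it is an isomorphism. -/
/-!
`CeC = C` means `1 = ∑ xᵢ e yᵢ` for finitely many `xᵢ, yᵢ ∈ C`. For any idempotents `p, r`, such a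
decomposition makes `c ↦ ∑ (p c xᵢ e) ⊗ (e yᵢ r)` a two-sided inverse of the multiplication map
`pCe ⊗_{eCe} eCr → pCr`: one composite is `c ↦ p c (∑ xᵢ e yᵢ) r`, and in the other balancedness
moves `e n xᵢ e` across the tensor sign, where it recombines with `e yᵢ r` into `n`. Take
`p = r = 1` for `μ` and `p = r = 1 - e` for `f`. Conversely both maps take values in `CeC`, as
`m n = m e n`; so surjectivity of `μ` puts `1` in `CeC`, and surjectivity of `f` puts `1 - e`
there, hence also `1 = e + (1 - e)`.
-/

open CategoryTheory MulOpposite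

attribute [local instance] HasDerivedCategory.standard
attribute [local instance] CategoryTheory.hasExt_of_hasDerivedCategory

set_option maxHeartbeats 1000000
set_option synthInstance.maxHeartbeats 400000
set_option linter.unusedSectionVars false
set_option linter.unusedVariables false

noncomputable section
namespace MoritaHochschild

/-! ### Corners `pCq` of a ring with idempotents `p`, `q` -/

variable {C : Type} [Ring C]

instance factOneIdem : Fact (IsIdempotentElem (1 : C)) := ⟨IsIdempotentElem.one⟩

instance factOneSubIdem {e : C} [he : Fact (IsIdempotentElem e)] :
    Fact (IsIdempotentElem (1 - e)) := ⟨he.out.one_sub⟩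

/-- The subset `pCq` of a ring `C`; for idempotents `p`, `q` this is the
corresponding "corner" of `C`. -/
def Hand (p q : C) : Type := {x : C // p * x * q = x}

namespace Hand

variable {p q r : C}

def val (x : Hand p q) : C := x.1

lemma prop (x : Hand p q) : p * x.val * q = x.val := x.2

lemma val_injective : Function.Injective (val (p := p) (q := q)) :=
  fun _ _ h => Subtype.ext h

def mk (x : C) (h : p * x * q = x) : Hand p q := ⟨x, h⟩

instance : Zero (Hand p q) := ⟨⟨0, by simp⟩⟩
instance : Add (Hand p q) :=
  ⟨fun x y => ⟨x.val + y.val, by rw [mul_add, add_mul, x.prop, y.prop]⟩⟩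
instance : Neg (Hand p q) :=
  ⟨fun x => ⟨-x.val, by rw [mul_neg, neg_mul, x.prop]⟩⟩
instance : Sub (Hand p q) :=
  ⟨fun x y => ⟨x.val - y.val, by rw [mul_sub, sub_mul, x.prop, y.prop]⟩⟩
instance : SMul ℕ (Hand p q) :=
  ⟨fun n x => ⟨n • x.val, by rw [mul_smul_comm, smul_mul_assoc, x.prop]⟩⟩
instance : SMul ℤ (Hand p q) :=
  ⟨fun n x => ⟨n • x.val, by rw [mul_smul_comm, smul_mul_assoc, x.prop]⟩⟩

instance : AddCommGroup (Hand p q) :=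
  val_injective.addCommGroup val rfl (fun _ _ => rfl) (fun _ => rfl) (fun _ _ => rfl)
    (fun _ _ => rfl) (fun _ _ => rfl)

/-- `val` as an additive map. -/
def valHom : Hand p q →+ C where
  toFun := val
  map_zero' := rfl
  map_add' := fun _ _ => rfl

@[simp] lemma val_add (x y : Hand p q) : (x + y).val = x.val + y.val := rfl
@[simp] lemma val_zero : (0 : Hand p q).val = 0 := rfl

section Facts

variable [hp : Fact (IsIdempotentElem p)] [hq : Fact (IsIdempotentElem q)]
    [hr : Fact (IsIdempotentElem r)]

lemma left_absorb (x : Hand p q) : p * x.val = x.val := by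
  conv_lhs => rw [← x.prop]
  rw [← mul_assoc, ← mul_assoc, hp.out.eq]
  exact x.prop

lemma right_absorb (x : Hand p q) : x.val * q = x.val := by
  conv_lhs => rw [← x.prop]
  rw [mul_assoc, mul_assoc, hq.out.eq, ← mul_assoc]
  exact x.prop

/-- Multiplication `pCq × qCr → pCr`. -/
def hmul (x : Hand p q) (y : Hand q r) : Hand p r :=
  ⟨x.val * y.val, by
    rw [← mul_assoc, left_absorb x, mul_assoc, right_absorb y]⟩

@[simp] lemma val_hmul (x : Hand p q) (y : Hand q r) :
    (hmul x y).val = x.val * y.val := rfl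

/-- Compression of an element of `C` into the corner `pCq`. -/
def compress (p q : C) [hp : Fact (IsIdempotentElem p)] [hq : Fact (IsIdempotentElem q)]
    (x : C) : Hand p q :=
  ⟨p * x * q, by
    have h1 : p * (p * x * q) * q = (p * p) * x * (q * q) := by noncomm_ring
    rw [h1, hp.out.eq, hq.out.eq]⟩

@[simp] lemma val_compress (x : C) : (compress p q x).val = p * x * q := rfl

instance : Mul (Hand p p) := ⟨fun x y => hmul x y⟩

instance : One (Hand p p) := ⟨⟨p, by rw [hp.out.eq, hp.out.eq]⟩⟩

@[simp] lemma val_mul (x y : Hand p p) : (x * y).val = x.val * y.val := rfl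
@[simp] lemma val_one : (1 : Hand p p).val = p := rfl

/-- The corner `pCp` is a ring, with unit `p`. -/
instance ring : Ring (Hand p p) :=
  { (inferInstance : AddCommGroup (Hand p p)) with
    mul := (· * ·)
    left_distrib := fun x y z => Subtype.ext (mul_add x.val y.val z.val)
    right_distrib := fun x y z => Subtype.ext (add_mul x.val y.val z.val)
    zero_mul := fun x => Subtype.ext (zero_mul x.val)
    mul_zero := fun x => Subtype.ext (mul_zero x.val)
    mul_assoc := fun x y z => Subtype.ext (mul_assoc x.val y.val z.val)
    one := 1
    one_mul := fun x => Subtype.ext (left_absorb x)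
    mul_one := fun x => Subtype.ext (right_absorb x) }

/-- `pCq` is a left module over the corner ring `pCp`. -/
instance : Module (Hand p p) (Hand p q) where
  smul a x := hmul a x
  one_smul x := Subtype.ext (left_absorb x)
  mul_smul a b x := Subtype.ext (mul_assoc a.val b.val x.val)
  smul_zero a := Subtype.ext (mul_zero a.val)
  smul_add a x y := Subtype.ext (mul_add a.val x.val y.val)
  add_smul a b x := Subtype.ext (add_mul a.val b.val x.val)
  zero_smul x := Subtype.ext (zero_mul x.val)

/-- `pCq` is a right module over the corner ring `qCq`. -/
instance : Module (Hand q q)ᵐᵒᵖ (Hand p q) where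
  smul a x := hmul x a.unop
  one_smul x := Subtype.ext (right_absorb x)
  mul_smul a b x := Subtype.ext (mul_assoc x.val b.unop.val a.unop.val).symm
  smul_zero a := Subtype.ext (zero_mul a.unop.val)
  smul_add a x y := Subtype.ext (add_mul x.val y.val a.unop.val)
  add_smul a b x := Subtype.ext (mul_add x.val a.unop.val b.unop.val)
  zero_smul x := Subtype.ext (mul_zero x.val)

@[simp] lemma val_smul (a : Hand p p) (x : Hand p q) : (a • x).val = a.val * x.val := rfl

@[simp] lemma val_op_smul (a : (Hand q q)ᵐᵒᵖ) (x : Hand p q) :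
    (a • x).val = x.val * a.unop.val := rfl

/-- `pC = pC1` is a right module over `C` itself. -/
instance : Module Cᵐᵒᵖ (Hand p (1 : C)) where
  smul c x := ⟨x.val * c.unop, by rw [mul_one, ← mul_assoc, left_absorb x]⟩
  one_smul x := Subtype.ext (mul_one x.val)
  mul_smul a b x := Subtype.ext (mul_assoc x.val b.unop a.unop).symm
  smul_zero a := Subtype.ext (zero_mul a.unop)
  smul_add a x y := Subtype.ext (add_mul x.val y.val a.unop)
  add_smul a b x := Subtype.ext (mul_add x.val a.unop b.unop)
  zero_smul x := Subtype.ext (mul_zero x.val)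

@[simp] lemma val_op_smul' (c : Cᵐᵒᵖ) (x : Hand p (1 : C)) :
    (c • x).val = x.val * c.unop := rfl

/-- `Cq = 1Cq` is a left module over `C` itself. -/
instance : Module C (Hand (1 : C) q) where
  smul c x := ⟨c * x.val, by rw [one_mul, mul_assoc, right_absorb x]⟩
  one_smul x := Subtype.ext (one_mul x.val)
  mul_smul a b x := Subtype.ext (mul_assoc a b x.val)
  smul_zero a := Subtype.ext (mul_zero a)
  smul_add a x y := Subtype.ext (mul_add a x.val y.val)
  add_smul a b x := Subtype.ext (add_mul a b x.val)
  zero_smul x := Subtype.ext (zero_mul x.val)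

@[simp] lemma val_smul' (c : C) (x : Hand (1 : C) q) :
    (c • x).val = c * x.val := rfl

end Facts

end Hand
/-! ### The Morita defect `C̄ = C/CeC` -/

/-- The Morita defect: the quotient ring `C/CeC` of `C` by the two-sided ideal
generated by the idempotent `e`. -/
def CBar (e : C) : Type := (TwoSidedIdeal.span {e}).ringCon.Quotient

instance (e : C) : Ring (CBar e) :=
  inferInstanceAs (Ring (TwoSidedIdeal.span {e}).ringCon.Quotient)

/-- The quotient map `C → C/CeC`. -/
def cbarMk (e : C) : C →+* CBar e := RingCon.mk' _

lemma cbarMk_surjective (e : C) : Function.Surjective (cbarMk e) :=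
  fun x => Quotient.inductionOn' x (fun c => ⟨c, rfl⟩)

lemma cbarMk_eq_zero_iff (e : C) (x : C) :
    cbarMk e x = 0 ↔ x ∈ TwoSidedIdeal.span {e} := by
  have : (0 : CBar e) = cbarMk e 0 := rfl
  rw [this]
  constructor
  · intro h
    have h' := (RingCon.eq _).1 h
    simpa using (TwoSidedIdeal.rel_iff _ _ _).1 h'
  · intro h
    exact (RingCon.eq _).2 ((TwoSidedIdeal.rel_iff _ _ _).2 (by simpa using h))

/-- `C/CeC` as a right `C`-module. -/
noncomputable instance (e : C) : Module Cᵐᵒᵖ (CBar e) :=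
  Module.compHom (CBar e) (RingHom.op (cbarMk e))

lemma op_smul_cbar (e : C) (c : C) (x : CBar e) :
    (MulOpposite.op c) • x = x * cbarMk e c := rfl

/-- `C/CeC` as a left `C`-module. -/
noncomputable instance cbarLeftModule (e : C) : Module C (CBar e) :=
  Module.compHom (CBar e) (cbarMk e)

lemma smul_cbar (e : C) (c : C) (x : CBar e) :
    c • x = cbarMk e c * x := rfl
/-! ### Balanced tensor products over a (noncommutative) ring, via their universal property -/

/-- The biadditive pairing `φ : M × N → T` exhibits `T` as the balanced tensor product
`M ⊗_A N` of a right `A`-module `M` and a left `A`-module `N`. -/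
structure IsTensorProd (A : Type) [Ring A] (M N T : Type) [AddCommGroup M] [AddCommGroup N]
    [AddCommGroup T] [Module Aᵐᵒᵖ M] [Module A N] (φ : M →+ N →+ T) : Prop where
  balanced : ∀ (a : A) (m : M) (n : N), φ (MulOpposite.op a • m) n = φ m (a • n)
  generates : ∀ t : T, t ∈ AddSubgroup.closure {t : T | ∃ m n, t = φ m n}
  lift : ∀ (T' : Type) [AddCommGroup T'] (ψ : M →+ N →+ T'),
    (∀ (a : A) (m : M) (n : N), ψ (MulOpposite.op a • m) n = ψ m (a • n)) →
      ∃ g : T →+ T', ∀ m n, g (φ m n) = ψ m n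


section MultiplicationMaps

variable {C : Type} [Ring C]

lemma subsingleton_cbar_iff_one_mem_span (e : C) :
    Subsingleton (CBar e) ↔ (1 : C) ∈ TwoSidedIdeal.span {e} := by
  rw [← cbarMk_eq_zero_iff, ← subsingleton_iff_zero_eq_one, map_one, eq_comm]

lemma exists_sum_mul_mul_eq_of_mem_span_singleton {e c : C}
    (hc : c ∈ TwoSidedIdeal.span {e}) :
    ∃ (k : ℕ) (x y : Fin k → C), ∑ i, x i * e * y i = c := by
  induction hc using TwoSidedIdeal.span_induction with
  | mem c hc => exact ⟨1, 1, 1, by simp [Set.mem_singleton_iff.mp hc]⟩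
  | zero => exact ⟨0, ![], ![], by simp⟩
  | add _ _ _ _ ha hb =>
    obtain ⟨k, x, y, rfl⟩ := ha
    obtain ⟨l, x', y', rfl⟩ := hb
    exact ⟨k + l, Fin.append x x', Fin.append y y', by simp [Fin.sum_univ_add]⟩
  | neg _ _ ha =>
    obtain ⟨k, x, y, rfl⟩ := ha
    exact ⟨k, -x, y, by simp [neg_mul]⟩
  | left_absorb a _ _ ha =>
    obtain ⟨k, x, y, rfl⟩ := ha
    exact ⟨k, fun i => a * x i, y, by simp [Finset.mul_sum, mul_assoc]⟩
  | right_absorb b _ _ ha =>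
    obtain ⟨k, x, y, rfl⟩ := ha
    exact ⟨k, x, fun i => y i * b, by simp [Finset.sum_mul, mul_assoc]⟩

namespace Hand

variable {e p r : C}

lemma val_sum {ι : Type} (s : Finset ι) (g : ι → Hand p r) :
    (∑ i ∈ s, g i).val = ∑ i ∈ s, (g i).val :=
  map_sum valHom g s

variable [Fact (IsIdempotentElem e)] [Fact (IsIdempotentElem p)]

lemma val_mul_val_mem_span (m : Hand p e) (n : Hand e r) :
    m.val * n.val ∈ TwoSidedIdeal.span {e} := by
  rw [← right_absorb m]
  exact TwoSidedIdeal.mul_mem_right _ _ _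
    (TwoSidedIdeal.mul_mem_left _ _ _ (TwoSidedIdeal.subset_span (Set.mem_singleton e)))

lemma compress_val_mul (m : Hand p e) (a : C) :
    compress p e (m.val * a) = op (compress e e a) • m := by
  apply val_injective
  show p * (m.val * a) * e = m.val * (e * a * e)
  calc p * (m.val * a) * e = m.val * a * e := by rw [← mul_assoc, left_absorb m]
    _ = m.val * e * a * e := by rw [right_absorb m]
    _ = m.val * (e * a * e) := by noncomm_ring

variable [Fact (IsIdempotentElem r)]

lemma compress_add (a b : C) : compress p r (a + b) = compress p r a + compress p r b :=
  val_injective (by simp [mul_add, add_mul])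

lemma val_compress_mul_val_compress (c x y : C) :
    (compress p e (c * x)).val * (compress e r y).val = p * c * (x * e * y) * r := by
  have hee : e * e = e := (Fact.out : IsIdempotentElem e)
  simp only [val_compress]
  calc p * (c * x) * e * (e * y * r) = p * c * (x * (e * e) * y) * r := by noncomm_ring
    _ = p * c * (x * e * y) * r := by rw [hee]

end Hand

namespace IsTensorProd

variable {A M N T : Type} [Ring A] [AddCommGroup M] [AddCommGroup N] [AddCommGroup T]
  [Module Aᵐᵒᵖ M] [Module A N] {φ : M →+ N →+ T}

lemma addMonoidHom_ext (hT : IsTensorProd A M N T φ) {X : Type} [AddCommGroup X]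
    {g₁ g₂ : T →+ X} (h : ∀ m n, g₁ (φ m n) = g₂ (φ m n)) : g₁ = g₂ := by
  ext t
  refine AddMonoidHom.eqOn_closure (s := {t | ∃ m n, t = φ m n}) ?_ (hT.generates t)
  rintro _ ⟨m, n, rfl⟩
  exact h m n

lemma map_mem (hT : IsTensorProd A M N T φ) {X S : Type} [AddCommGroup X] [SetLike S X]
    [AddSubgroupClass S X] (s : S) (g : T →+ X) (h : ∀ m n, g (φ m n) ∈ s) (t : T) :
    g t ∈ s := by
  induction hT.generates t using AddSubgroup.closure_induction with
  | mem _ ht => obtain ⟨m, n, rfl⟩ := ht; exact h m n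
  | zero => simp
  | add _ _ _ _ ha hb => simpa using add_mem ha hb
  | neg _ _ ha => simpa using neg_mem ha

end IsTensorProd

variable {e p r : C} [Fact (IsIdempotentElem e)] [Fact (IsIdempotentElem p)]
  [Fact (IsIdempotentElem r)] {T : Type} [AddCommGroup T] {φ : Hand p e →+ Hand e r →+ T}
  {ν : T →+ C}

lemma IsTensorProd.mul_map_mem_span (hT : IsTensorProd (Hand e e) (Hand p e) (Hand e r) T φ)
    (hν : ∀ m n, ν (φ m n) = m.val * n.val) (t : T) : ν t ∈ TwoSidedIdeal.span {e} :=
  hT.map_mem _ ν (fun m n => hν m n ▸ Hand.val_mul_val_mem_span m n) t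

def mulMapInv (φ : Hand p e →+ Hand e r →+ T) {k : ℕ} (x y : Fin k → C) : C →+ T :=
  AddMonoidHom.mk' (fun c => ∑ i, φ (Hand.compress p e (c * x i)) (Hand.compress e r (y i)))
    fun a b => by
      simp only [add_mul, Hand.compress_add, map_add, AddMonoidHom.add_apply,
        Finset.sum_add_distrib]

lemma mulMapInv_apply {k : ℕ} (x y : Fin k → C) (c : C) :
    mulMapInv φ x y c = ∑ i, φ (Hand.compress p e (c * x i)) (Hand.compress e r (y i)) := rfl

variable {k : ℕ} {x y : Fin k → C}

lemma apply_mulMapInv (hν : ∀ m n, ν (φ m n) = m.val * n.val)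
    (hxy : ∑ i, x i * e * y i = 1) (c : C) : ν (mulMapInv φ x y c) = p * c * r := by
  simp only [mulMapInv_apply, map_sum, hν, Hand.val_compress_mul_val_compress,
    ← Finset.sum_mul, ← Finset.mul_sum, hxy, mul_one]

lemma IsTensorProd.mulMapInv_apply_map
    (hT : IsTensorProd (Hand e e) (Hand p e) (Hand e r) T φ)
    (hν : ∀ m n, ν (φ m n) = m.val * n.val) (hxy : ∑ i, x i * e * y i = 1) (t : T) :
    mulMapInv φ x y (ν t) = t := by
  suffices (mulMapInv φ x y).comp ν = AddMonoidHom.id T from DFunLike.congr_fun this t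
  refine hT.addMonoidHom_ext fun m n => ?_
  have hn : ∑ i, Hand.compress e e (n.val * x i) • Hand.compress e r (y i) = n := by
    apply Hand.val_injective
    simp only [Hand.val_sum, Hand.val_smul, Hand.val_compress_mul_val_compress,
      ← Finset.sum_mul, ← Finset.mul_sum, hxy, mul_one, Hand.left_absorb, Hand.right_absorb]
  simp only [AddMonoidHom.comp_apply, AddMonoidHom.id_apply, hν, mulMapInv_apply, mul_assoc,
    Hand.compress_val_mul, hT.balanced, ← map_sum, hn]

lemma IsTensorProd.injective_of_one_mem_span
    (hT : IsTensorProd (Hand e e) (Hand p e) (Hand e r) T φ)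
    (hν : ∀ m n, ν (φ m n) = m.val * n.val) (h1 : (1 : C) ∈ TwoSidedIdeal.span {e}) :
    Function.Injective ν := by
  obtain ⟨k, x, y, hxy⟩ := exists_sum_mul_mul_eq_of_mem_span_singleton h1
  exact Function.LeftInverse.injective (hT.mulMapInv_apply_map hν hxy)

lemma exists_eq_of_one_mem_span (hν : ∀ m n, ν (φ m n) = m.val * n.val)
    (h1 : (1 : C) ∈ TwoSidedIdeal.span {e}) {c : C} (hc : p * c * r = c) : ∃ t, ν t = c := by
  obtain ⟨k, x, y, hxy⟩ := exists_sum_mul_mul_eq_of_mem_span_singleton h1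
  exact ⟨mulMapInv φ x y c, (apply_mulMapInv hν hxy c).trans hc⟩

end MultiplicationMaps

/-- For a Morita context `(C, e)`, the following are equivalent:
`e` is a Morita idempotent (`C̄ = C/CeC = 0`); the multiplication map
`μ_e : Ce ⊗_A eC → C` is surjective (and then bijective); the multiplication map
`f : e'Ce ⊗_A eCe' → e'Ce' = B` is surjective (and then bijective). -/
theorem morita_idempotent_via_multiplication_maps
    (C : Type) [Ring C] (e : C) [Fact (IsIdempotentElem e)]
    -- Ce ⊗_A eC
    (T₂ : Type) [AddCommGroup T₂] (φ₂ : Hand (1 : C) e →+ Hand e (1 : C) →+ T₂)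
    (hT₂ : IsTensorProd (Hand e e) (Hand (1 : C) e) (Hand e (1 : C)) T₂ φ₂)
    (μ : T₂ →+ C) (hμ : ∀ x y, μ (φ₂ x y) = x.val * y.val)
    -- e'Ce ⊗_A eCe'
    (T : Type) [AddCommGroup T] (φ : Hand (1 - e) e →+ Hand e (1 - e) →+ T)
    (hT : IsTensorProd (Hand e e) (Hand (1 - e) e) (Hand e (1 - e)) T φ)
    (f : T →+ Hand (1 - e) (1 - e)) (hf : ∀ m n, (f (φ m n)).val = m.val * n.val) :
    (Subsingleton (CBar e) ↔ Function.Surjective μ)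
    ∧ (Subsingleton (CBar e) → Function.Bijective μ)
    ∧ (Subsingleton (CBar e) ↔ Function.Surjective f)
    ∧ (Subsingleton (CBar e) → Function.Bijective f) := by
  have hf_val : ∀ m n, (Hand.valHom.comp f) (φ m n) = m.val * n.val := hf
  have bijective_μ (h1 : (1 : C) ∈ TwoSidedIdeal.span {e}) : Function.Bijective μ :=
    ⟨hT₂.injective_of_one_mem_span hμ h1,
      fun c => exists_eq_of_one_mem_span hμ h1 (by rw [one_mul, mul_one])⟩
  have bijective_f (h1 : (1 : C) ∈ TwoSidedIdeal.span {e}) : Function.Bijective f := by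
    refine ⟨fun t t' h => hT.injective_of_one_mem_span hf_val h1 (congrArg Hand.val h),
      fun b => ?_⟩
    obtain ⟨t, ht⟩ := exists_eq_of_one_mem_span hf_val h1 b.prop
    exact ⟨t, Hand.val_injective ht⟩
  have one_mem_of_surjective_μ (h : Function.Surjective μ) :
      (1 : C) ∈ TwoSidedIdeal.span {e} := by
    obtain ⟨t, ht⟩ := h 1
    exact ht ▸ hT₂.mul_map_mem_span hμ t
  have one_mem_of_surjective_f (h : Function.Surjective f) :
      (1 : C) ∈ TwoSidedIdeal.span {e} := by
    obtain ⟨t, ht⟩ := h 1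
    have h1e : (f t).val ∈ TwoSidedIdeal.span {e} := hT.mul_map_mem_span hf_val t
    rw [ht, Hand.val_one] at h1e
    simpa using TwoSidedIdeal.add_mem _ (TwoSidedIdeal.subset_span (Set.mem_singleton e)) h1e
  simp only [subsingleton_cbar_iff_one_mem_span]
  exact ⟨⟨fun h => (bijective_μ h).2, one_mem_of_surjective_μ⟩, bijective_μ,
    ⟨fun h => (bijective_f h).2, one_mem_of_surjective_f⟩, bijective_f⟩

end MoritaHochschild
end
end

section
/- Let (C,e) be a Morita context with B = e'Ce' and Morita defects C̄ = C/CeC, C̄' = C/Ce'C. If C̄' = 0 (so that B and C are Morita equivalent), then grade_B(C̄) = grade_C(C̄), where C̄ is regarded as a right B-module via the natural surjection B → C̄ and as a right C-module via the quotient map. -/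
/-!
If `C̄' = 0` then `1 = ∑ cᵢ e' dᵢ` in `C`, so `e'` is a full idempotent and `Y ↦ Ye'` is an
equivalence `Mod-C ≌ Mod-B`, with inverse `X ↦ Hom_B(Ce', X)`. It sends `C̄` to `C̄e' = C̄`
(since `e` acts as `0` on `C̄`) and `C` to `Ce'`, so `Ext^n_C(C̄, C) ≅ Ext^n_B(C̄, Ce')`.
Finally `Ext^n_B(C̄, Ce')` and `Ext^n_B(C̄, B)` vanish together: `B` is a direct summand of
`Ce'`, and `Ce'` is a direct summand of `Bᵐ`.
-/

open CategoryTheory MulOpposite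

attribute [local instance] HasDerivedCategory.standard
attribute [local instance] CategoryTheory.hasExt_of_hasDerivedCategory

set_option maxHeartbeats 1000000
set_option synthInstance.maxHeartbeats 400000
set_option linter.unusedSectionVars false
set_option linter.unusedVariables false

noncomputable section
namespace MoritaHochschild

/-! ### Corners `pCq` of a ring with idempotents `p`, `q` -/

variable {C : Type} [Ring C]

/-! ### `C̄` as a quotient of `B = e'Ce'` -/

/-- The canonical ring homomorphism `B = e'Ce' → C̄ = C/CeC`, where `e' = 1 - e`. -/
def betaBar (e : C) [Fact (IsIdempotentElem e)] :
    Hand (1 - e) (1 - e) →+* CBar e where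
  toFun b := cbarMk e b.val
  map_one' := by
    show cbarMk e (1 - e) = 1
    rw [map_sub, map_one]
    have h0 : cbarMk e e = 0 :=
      (cbarMk_eq_zero_iff e e).2 (TwoSidedIdeal.subset_span rfl)
    rw [h0, sub_zero]
  map_mul' x y := by
    show cbarMk e (x.val * y.val) = _
    rw [map_mul]
  map_zero' := map_zero _
  map_add' x y := by
    show cbarMk e (x.val + y.val) = _
    rw [map_add]

/-- `C̄` as a right module over `B = e'Ce'`. -/
noncomputable instance cbarModB (e : C) [Fact (IsIdempotentElem e)] :
    Module (Hand (1 - e) (1 - e))ᵐᵒᵖ (CBar e) :=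
  Module.compHom (CBar e) (RingHom.op (betaBar e))

lemma op_smul_cbarB (e : C) [Fact (IsIdempotentElem e)] (b : Hand (1 - e) (1 - e))
    (x : CBar e) : (MulOpposite.op b) • x = x * cbarMk e b.val := rfl

/-- `C̄` as a left module over `B = e'Ce'`. -/
noncomputable instance cbarLModB (e : C) [Fact (IsIdempotentElem e)] :
    Module (Hand (1 - e) (1 - e)) (CBar e) :=
  Module.compHom (CBar e) (betaBar e)
/-! ### Grade of a module, via vanishing of Ext -/

/-- The grade of a right `R`-module `X`:
`grade_R X = inf { i | Ext^i_R(X, R) ≠ 0 }`, as an element of `ℕ∞`. -/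
def rgrade (R : Type) [Ring R] (X : Type) [AddCommGroup X] [Module Rᵐᵒᵖ X] : ℕ∞ :=
  sInf {i : ℕ∞ | ∃ n : ℕ, i = n ∧
    ¬ Subsingleton (Abelian.Ext (ModuleCat.of Rᵐᵒᵖ X) (ModuleCat.of Rᵐᵒᵖ R) n)}

/-- The grade of a left `R`-module `X`. -/
def lgrade (R : Type) [Ring R] (X : Type) [AddCommGroup X] [Module R X] : ℕ∞ :=
  sInf {i : ℕ∞ | ∃ n : ℕ, i = n ∧
    ¬ Subsingleton (Abelian.Ext (ModuleCat.of R X) (ModuleCat.of R R) n)}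

section ExtTransfer

open Abelian

variable {A : Type*} [Category A] [Abelian A] [HasExt A]

lemma subsingleton_ext_of_sum_comp_eq_id {X N M : A} {ι : Type*} [Fintype ι]
    (p : ι → (N ⟶ M)) (s : ι → (M ⟶ N)) (hps : ∑ i, p i ≫ s i = 𝟙 N) (n : ℕ)
    [Subsingleton (Ext X M n)] : Subsingleton (Ext X N n) := by
  refine subsingleton_of_forall_eq 0 fun α => ?_
  rw [← α.comp_mk₀_id, ← hps, Ext.mk₀_sum, Ext.comp_sum]
  refine Finset.sum_eq_zero fun i _ => ?_
  rw [← Ext.mk₀_comp_mk₀, ← Ext.comp_assoc_of_third_deg_zero,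
    Subsingleton.elim (α.comp (Ext.mk₀ (p i)) (add_zero n)) 0, Ext.zero_comp]

lemma subsingleton_ext_of_retract {X N M : A} (i : N ⟶ M) (r : M ⟶ N) (hir : i ≫ r = 𝟙 N)
    (n : ℕ) [Subsingleton (Ext X M n)] : Subsingleton (Ext X N n) :=
  subsingleton_ext_of_sum_comp_eq_id (ι := Unit) (fun _ => i) (fun _ => r) (by simpa using hir) n

lemma subsingleton_ext_congr {X X' Y Y' : A} (eX : X ≅ X') (eY : Y ≅ Y') (n : ℕ) :
    Subsingleton (Ext X Y n) ↔ Subsingleton (Ext X' Y' n) :=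
  Equiv.subsingleton_congr
    { toFun α := (Ext.mk₀ eX.inv).comp (α.comp (Ext.mk₀ eY.hom) (add_zero n)) (zero_add n)
      invFun β := (Ext.mk₀ eX.hom).comp (β.comp (Ext.mk₀ eY.inv) (add_zero n)) (zero_add n)
      left_inv α := by simp
      right_inv β := by simp }

lemma subsingleton_ext_iff_of_equivalence {A' : Type*} [Category A'] [Abelian A'] [HasExt A']
    [EnoughProjectives A] (E : A ≌ A') (X Y : A) (n : ℕ) :
    Subsingleton (Ext X Y n) ↔ Subsingleton (Ext (E.functor.obj X) (E.functor.obj Y) n) := by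
  have := E.functor.additive_of_preserves_binary_products
  exact (Equiv.ofBijective _
    (E.functor.mapExt_bijective_of_preservesProjectiveObjects X Y n)).subsingleton_congr

end ExtTransfer

lemma rgrade_congr {R S X Y : Type} [Ring R] [Ring S] [AddCommGroup X] [Module Rᵐᵒᵖ X]
    [AddCommGroup Y] [Module Sᵐᵒᵖ Y]
    (h : ∀ n : ℕ, Subsingleton (Abelian.Ext (ModuleCat.of Rᵐᵒᵖ X) (ModuleCat.of Rᵐᵒᵖ R) n) ↔
      Subsingleton (Abelian.Ext (ModuleCat.of Sᵐᵒᵖ Y) (ModuleCat.of Sᵐᵒᵖ S) n)) :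
    rgrade R X = rgrade S Y := by
  simp_rw [rgrade, h]

lemma exists_sum_mul_mul_eq_of_mem_span {R : Type*} [Ring R] {a x : R}
    (hx : x ∈ TwoSidedIdeal.span {a}) :
    ∃ (m : ℕ) (c d : Fin m → R), ∑ i, c i * a * d i = x := by
  induction hx using TwoSidedIdeal.span_induction with
  | mem x hx => exact ⟨1, 1, 1, by simp [Set.mem_singleton_iff.1 hx]⟩
  | zero => exact ⟨0, Fin.elim0, Fin.elim0, rfl⟩
  | add x y _ _ hx hy =>
    obtain ⟨m, c, d, rfl⟩ := hx
    obtain ⟨m', c', d', rfl⟩ := hy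
    exact ⟨m + m', Fin.append c c', Fin.append d d', by simp [Fin.sum_univ_add]⟩
  | neg x _ hx =>
    obtain ⟨m, c, d, rfl⟩ := hx
    exact ⟨m, -c, d, by simp⟩
  | left_absorb y x _ hx =>
    obtain ⟨m, c, d, rfl⟩ := hx
    exact ⟨m, fun i => y * c i, d, by simp [Finset.mul_sum, mul_assoc]⟩
  | right_absorb y x _ hx =>
    obtain ⟨m, c, d, rfl⟩ := hx
    exact ⟨m, c, fun i => d i * y, by simp [Finset.sum_mul, mul_assoc]⟩

section HomModule

universe u v

variable {R S : Type u} [Ring R] [Ring S] (M : Type v) [AddCommGroup M] [Module S M]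
  [Module Rᵐᵒᵖ M] [SMulCommClass S Rᵐᵒᵖ M]

-- Only a local instance: for an `Sᵐᵒᵖ`-module `N` it would form a diamond with `LinearMap.module`.
abbrev homModule (N : Type*) [AddCommGroup N] [Module Rᵐᵒᵖ N] :
    Module Sᵐᵒᵖ (M →ₗ[Rᵐᵒᵖ] N) where
  smul s f := f ∘ₗ DistribSMul.toLinearMap Rᵐᵒᵖ M s.unop
  one_smul f := LinearMap.ext fun x => congrArg f (one_smul S x)
  mul_smul s t f := LinearMap.ext fun x => congrArg f (mul_smul t.unop s.unop x)
  smul_zero _ := rfl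
  smul_add _ _ _ := rfl
  add_smul s t f := LinearMap.ext fun x => by
    change f ((s + t).unop • x) = f (s.unop • x) + f (t.unop • x)
    rw [MulOpposite.unop_add, add_smul, map_add]
  zero_smul f := LinearMap.ext fun x => by
    change f ((0 : Sᵐᵒᵖ).unop • x) = 0
    rw [MulOpposite.unop_zero, zero_smul, map_zero]

attribute [local instance] homModule

variable {M} in
lemma homModule_smul_apply {N : Type*} [AddCommGroup N] [Module Rᵐᵒᵖ N] (s : Sᵐᵒᵖ)
    (f : M →ₗ[Rᵐᵒᵖ] N) (x : M) : (s • f) x = f (s.unop • x) := rfl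

def homFunctor : ModuleCat.{v} Rᵐᵒᵖ ⥤ ModuleCat.{v} Sᵐᵒᵖ where
  obj X := ModuleCat.of Sᵐᵒᵖ (M →ₗ[Rᵐᵒᵖ] X)
  map g := ModuleCat.ofHom
    { toFun f := g.hom ∘ₗ f
      map_add' f₁ f₂ := LinearMap.comp_add f₁ f₂ g.hom
      map_smul' _ _ := rfl }

end HomModule

namespace Hand

variable {p q r : C} [Fact (IsIdempotentElem p)] [Fact (IsIdempotentElem q)]
  [Fact (IsIdempotentElem r)]

def mulLeft (c : C) (hc : q * c = c) : Hand p r →ₗ[(Hand r r)ᵐᵒᵖ] Hand q r where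
  toFun x := ⟨c * x.val, by rw [← mul_assoc, hc, mul_assoc, right_absorb]⟩
  map_add' x y := Subtype.ext (mul_add c x.val y.val)
  map_smul' b x := Subtype.ext (mul_assoc c x.val b.unop.val).symm

instance : SMulCommClass C (Hand q q)ᵐᵒᵖ (Hand (1 : C) q) where
  smul_comm c b x := Subtype.ext (mul_assoc c x.val b.unop.val).symm

end Hand

section Corner

variable {e : C} [Fact (IsIdempotentElem e)]

lemma mul_self_one_sub : (1 - e) * (1 - e) = 1 - e := (Fact.out : IsIdempotentElem e).one_sub

variable (e) in
def cornerSubgroup (Y : Type) [AddCommGroup Y] [Module Cᵐᵒᵖ Y] : AddSubgroup Y where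
  carrier := {y | op (1 - e) • y = y}
  add_mem' {x y} hx hy := by rw [Set.mem_ofPred_eq, smul_add, hx, hy]
  zero_mem' := smul_zero _
  neg_mem' {x} hx := by rw [Set.mem_ofPred_eq, smul_neg, hx]

lemma mem_cornerSubgroup {Y : Type} [AddCommGroup Y] [Module Cᵐᵒᵖ Y] {y : Y} :
    y ∈ cornerSubgroup e Y ↔ op (1 - e) • y = y := Iff.rfl

instance cornerSubgroup.module (Y : Type) [AddCommGroup Y] [Module Cᵐᵒᵖ Y] :
    Module (Hand (1 - e) (1 - e))ᵐᵒᵖ (cornerSubgroup e Y) where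
  smul b y := ⟨op b.unop.val • (y : Y), by
    rw [mem_cornerSubgroup, ← mul_smul, ← op_mul, Hand.right_absorb]⟩
  one_smul y := Subtype.ext y.2
  mul_smul a b y := Subtype.ext (mul_smul (op a.unop.val) (op b.unop.val) (y : Y))
  smul_zero b := Subtype.ext (smul_zero _)
  smul_add b x y := Subtype.ext (smul_add _ (x : Y) y)
  add_smul a b y := Subtype.ext (add_smul (op a.unop.val) (op b.unop.val) (y : Y))
  zero_smul y := Subtype.ext (zero_smul _ (y : Y))

@[simp] lemma cornerSubgroup.coe_smul {Y : Type} [AddCommGroup Y] [Module Cᵐᵒᵖ Y]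
    (b : (Hand (1 - e) (1 - e))ᵐᵒᵖ) (y : cornerSubgroup e Y) :
    ((b • y : cornerSubgroup e Y) : Y) = op b.unop.val • (y : Y) := rfl

variable (e) in
def cornerFunctor : ModuleCat Cᵐᵒᵖ ⥤ ModuleCat (Hand (1 - e) (1 - e))ᵐᵒᵖ where
  obj Y := ModuleCat.of _ (cornerSubgroup e Y)
  map f := ModuleCat.ofHom
    { toFun y := ⟨f y, by rw [mem_cornerSubgroup, ← map_smul, y.2]⟩
      map_add' x y := Subtype.ext (map_add f.hom x.1 y.1)
      map_smul' b y := Subtype.ext (map_smul f.hom _ y.1) }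

end Corner

section MoritaEquivalence

attribute [local instance] homModule

variable {e : C} [Fact (IsIdempotentElem e)] {m : ℕ} {c d : Fin m → C}

variable (e) in
def unitHom (Y : Type) [AddCommGroup Y] [Module Cᵐᵒᵖ Y] :
    Y →ₗ[Cᵐᵒᵖ] (Hand (1 : C) (1 - e) →ₗ[(Hand (1 - e) (1 - e))ᵐᵒᵖ] cornerSubgroup e Y) where
  toFun y :=
    { toFun x := ⟨op x.val • y, by rw [mem_cornerSubgroup, ← mul_smul, ← op_mul, Hand.right_absorb]⟩
      map_add' x x' := Subtype.ext (by simp [add_smul])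
      map_smul' b x := Subtype.ext (by simp [mul_smul]) }
  map_add' y y' := LinearMap.ext fun x => Subtype.ext (smul_add _ y y')
  map_smul' c y := LinearMap.ext fun x => Subtype.ext (by
    simp [homModule_smul_apply, ← mul_smul])

lemma sum_op_compress_smul_compress (hcd : ∑ i, c i * (1 - e) * d i = 1)
    (x : Hand (1 : C) (1 - e)) :
    ∑ i, op (Hand.compress (1 - e) (1 - e) (d i * x.val)) • Hand.compress 1 (1 - e) (c i) = x := by
  apply Hand.val_injective
  change Hand.valHom _ = _
  rw [map_sum]
  calc ∑ i, 1 * c i * (1 - e) * ((1 - e) * (d i * x.val) * (1 - e))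
      = ∑ i, c i * (1 - e) * d i * x.val := by
        refine Finset.sum_congr rfl fun i _ => ?_
        rw [mul_assoc (1 - e), mul_assoc (d i), Hand.right_absorb, one_mul, ← mul_assoc,
          mul_assoc (c i), mul_self_one_sub, mul_assoc, mul_assoc, mul_assoc]
    _ = x.val := by rw [← Finset.sum_mul, hcd, one_mul]

lemma cornerSubgroup.coe_op_compress_smul {Y : Type} [AddCommGroup Y] [Module Cᵐᵒᵖ Y]
    (y : cornerSubgroup e Y) {w : C} (hw : w * (1 - e) = w) :
    ((op (Hand.compress (1 - e) (1 - e) w) • y : cornerSubgroup e Y) : Y) = op w • (y : Y) := by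
  rw [cornerSubgroup.coe_smul, unop_op, Hand.val_compress, op_mul, op_mul, mul_smul, mul_smul,
    y.2, ← mul_smul, ← op_mul, hw]

lemma unitHom_bijective (hcd : ∑ i, c i * (1 - e) * d i = 1) (Y : Type) [AddCommGroup Y]
    [Module Cᵐᵒᵖ Y] : Function.Bijective (unitHom e Y) := by
  constructor
  · refine (injective_iff_map_eq_zero _).2 fun y hy => ?_
    have hcy : ∀ i, op (c i * (1 - e)) • y = 0 := fun i => by
      have h : op (1 * c i * (1 - e)) • y = 0 :=
        congrArg (fun g => (g (Hand.compress 1 (1 - e) (c i)) : Y)) hy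
      rwa [one_mul] at h
    rw [← one_smul Cᵐᵒᵖ y, ← op_one, ← hcd, Finset.op_sum, Finset.sum_smul]
    exact Finset.sum_eq_zero fun i _ => by rw [op_mul, mul_smul, hcy, smul_zero]
  · intro f
    refine ⟨∑ i, op (d i) • (f (Hand.compress 1 (1 - e) (c i)) : Y),
      LinearMap.ext fun x => Subtype.ext ?_⟩
    conv_rhs => rw [← sum_op_compress_smul_compress hcd x]
    change op x.val • _ = _
    rw [map_sum, AddSubgroup.val_finsetSum, Finset.smul_sum]
    refine Finset.sum_congr rfl fun i _ => ?_
    rw [map_smul, cornerSubgroup.coe_op_compress_smul _ (by rw [mul_assoc, Hand.right_absorb]),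
      ← mul_smul, ← op_mul]

variable (e) in
def counitHom (X : Type) [AddCommGroup X] [Module (Hand (1 - e) (1 - e))ᵐᵒᵖ X] :
    cornerSubgroup e (Hand (1 : C) (1 - e) →ₗ[(Hand (1 - e) (1 - e))ᵐᵒᵖ] X)
      →ₗ[(Hand (1 - e) (1 - e))ᵐᵒᵖ] X where
  toFun f := (f : Hand (1 : C) (1 - e) →ₗ[(Hand (1 - e) (1 - e))ᵐᵒᵖ] X) (Hand.compress 1 (1 - e) 1)
  map_add' f g := rfl
  map_smul' b f := by
    change (f : Hand (1 : C) (1 - e) →ₗ[(Hand (1 - e) (1 - e))ᵐᵒᵖ] X) (b.unop.val • _) = _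
    rw [← map_smul]
    congr 1
    apply Hand.val_injective
    change b.unop.val * (1 * 1 * (1 - e)) = 1 * 1 * (1 - e) * b.unop.val
    rw [one_mul, one_mul, Hand.right_absorb, Hand.left_absorb]

lemma cornerSubgroup.apply_eq_op_compress_smul {X : Type} [AddCommGroup X]
    [Module (Hand (1 - e) (1 - e))ᵐᵒᵖ X]
    (f : cornerSubgroup e (Hand (1 : C) (1 - e) →ₗ[(Hand (1 - e) (1 - e))ᵐᵒᵖ] X))
    (x : Hand (1 : C) (1 - e)) :
    (f : Hand (1 : C) (1 - e) →ₗ[(Hand (1 - e) (1 - e))ᵐᵒᵖ] X) x =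
      op (Hand.compress (1 - e) (1 - e) x.val) • counitHom e X f := by
  set g : Hand (1 : C) (1 - e) →ₗ[(Hand (1 - e) (1 - e))ᵐᵒᵖ] X := f.1
  calc g x = (op (1 - e) • g) x := congrArg (· x) f.2.symm
    _ = g ((Hand.compress (1 - e) (1 - e) x.val).val • Hand.compress 1 (1 - e) 1) := by
      refine congrArg g (Hand.val_injective ?_)
      change (1 - e) * x.val = (1 - e) * x.val * (1 - e) * (1 * 1 * (1 - e))
      rw [one_mul, one_mul, mul_assoc (1 - e) x.val, Hand.right_absorb, mul_assoc,
        Hand.right_absorb]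
    _ = counitHom e X (op (Hand.compress (1 - e) (1 - e) x.val) • f) := rfl
    _ = _ := map_smul (counitHom e X) _ f

variable (e) in
def counitInvFun {X : Type} [AddCommGroup X] [Module (Hand (1 - e) (1 - e))ᵐᵒᵖ X] (x : X) :
    Hand (1 : C) (1 - e) →ₗ[(Hand (1 - e) (1 - e))ᵐᵒᵖ] X where
  toFun p := op (Hand.compress (1 - e) (1 - e) p.val) • x
  map_add' p q := by
    rw [← add_smul, ← MulOpposite.op_add]
    congr 2
    exact Hand.val_injective (by simp [mul_add, add_mul])
  map_smul' b p := by
    rw [RingHom.id_apply, ← mul_smul]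
    congr 1
    apply MulOpposite.unop_injective
    apply Hand.val_injective
    simp only [unop_op, unop_mul, Hand.val_compress, Hand.val_op_smul, Hand.val_mul, mul_assoc,
      Hand.right_absorb]

lemma counitHom_bijective (X : Type) [AddCommGroup X] [Module (Hand (1 - e) (1 - e))ᵐᵒᵖ X] :
    Function.Bijective (counitHom e X) := by
  constructor
  · refine (injective_iff_map_eq_zero _).2 fun f hf => Subtype.ext (LinearMap.ext fun x => ?_)
    rw [cornerSubgroup.apply_eq_op_compress_smul, hf, smul_zero]
    rfl
  · intro x
    refine ⟨⟨counitInvFun e x, LinearMap.ext fun p => ?_⟩, ?_⟩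
    · change op (Hand.compress (1 - e) (1 - e) ((1 - e) * p.val)) • x = _
      congr 2
      exact Hand.val_injective (by simp [← mul_assoc, mul_self_one_sub])
    · change op (Hand.compress (1 - e) (1 - e) (1 * 1 * (1 - e))) • x = x
      rw [show Hand.compress (1 - e) (1 - e) (1 * 1 * (1 - e)) = 1 from
        Hand.val_injective (by simp [mul_self_one_sub]), op_one, one_smul]

variable (e) in
def moritaEquivalence (hcd : ∑ i, c i * (1 - e) * d i = 1) :
    ModuleCat Cᵐᵒᵖ ≌ ModuleCat (Hand (1 - e) (1 - e))ᵐᵒᵖ :=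
  CategoryTheory.Equivalence.mk (cornerFunctor e) (homFunctor (Hand (1 : C) (1 - e)))
    (NatIso.ofComponents
      (fun Y => (LinearEquiv.ofBijective (unitHom e Y) (unitHom_bijective hcd Y)).toModuleIso)
      (fun f => ModuleCat.hom_ext <| LinearMap.ext fun y => LinearMap.ext fun x =>
        Subtype.ext (map_smul f.hom _ y).symm))
    (NatIso.ofComponents
      (fun X => (LinearEquiv.ofBijective (counitHom e X) (counitHom_bijective X)).toModuleIso)
      (fun _ => rfl))

variable (e) in
def cornerCBarIso :
    (cornerFunctor e).obj (ModuleCat.of Cᵐᵒᵖ (CBar e)) ≅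
      ModuleCat.of (Hand (1 - e) (1 - e))ᵐᵒᵖ (CBar e) :=
  LinearEquiv.toModuleIso
    { toFun x := x.1
      invFun x := ⟨x, by
        rw [mem_cornerSubgroup, op_smul_cbar, map_sub, map_one,
          (cbarMk_eq_zero_iff e e).2 (TwoSidedIdeal.subset_span rfl), sub_zero, mul_one]⟩
      left_inv _ := rfl
      right_inv _ := rfl
      map_add' _ _ := rfl
      map_smul' _ _ := rfl }

variable (e) in
def cornerSelfIso :
    (cornerFunctor e).obj (ModuleCat.of Cᵐᵒᵖ C) ≅
      ModuleCat.of (Hand (1 - e) (1 - e))ᵐᵒᵖ (Hand (1 : C) (1 - e)) :=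
  LinearEquiv.toModuleIso
    { toFun x := ⟨x.1, by rw [one_mul]; exact x.2⟩
      invFun x := ⟨x.val, Hand.right_absorb x⟩
      left_inv _ := rfl
      right_inv _ := rfl
      map_add' _ _ := rfl
      map_smul' _ _ := rfl }

lemma subsingleton_ext_corner_iff (hcd : ∑ i, c i * (1 - e) * d i = 1)
    (X : ModuleCat (Hand (1 - e) (1 - e))ᵐᵒᵖ) (n : ℕ) :
    Subsingleton (Abelian.Ext X (ModuleCat.of _ (Hand (1 - e) (1 - e))) n) ↔
      Subsingleton (Abelian.Ext X (ModuleCat.of _ (Hand (1 : C) (1 - e))) n) := by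
  constructor
  · intro _
    -- `Ce'` is a direct summand of `Bᵐ`, through `x ↦ (e'dᵢx)ᵢ` and `(bᵢ) ↦ ∑ cᵢe'bᵢ`.
    refine subsingleton_ext_of_sum_comp_eq_id
      (fun i => ModuleCat.ofHom
        (Hand.mulLeft ((1 - e) * d i) (by rw [← mul_assoc, mul_self_one_sub])))
      (fun i => ModuleCat.ofHom (Hand.mulLeft (c i * (1 - e)) (one_mul _))) ?_ n
    refine ModuleCat.hom_ext (LinearMap.ext fun x => Hand.val_injective ?_)
    simp only [ModuleCat.hom_sum, ModuleCat.hom_comp, ModuleCat.hom_ofHom, LinearMap.sum_apply,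
      LinearMap.comp_apply, ModuleCat.hom_id, LinearMap.id_apply]
    change Hand.valHom _ = _
    rw [map_sum]
    calc ∑ i, c i * (1 - e) * ((1 - e) * d i * x.val)
        = ∑ i, c i * (1 - e) * d i * x.val := Finset.sum_congr rfl fun i _ => by
          rw [← mul_assoc, ← mul_assoc, mul_assoc (c i), mul_self_one_sub]
      _ = x.val := by rw [← Finset.sum_mul, hcd, one_mul]
  · intro _
    refine subsingleton_ext_of_retract (ModuleCat.ofHom (Hand.mulLeft 1 (one_mul 1)))
      (ModuleCat.ofHom (Hand.mulLeft (1 - e) mul_self_one_sub)) ?_ n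
    refine ModuleCat.hom_ext (LinearMap.ext fun x => Hand.val_injective ?_)
    change (1 - e) * (1 * x.val) = x.val
    rw [one_mul, Hand.left_absorb]

end MoritaEquivalence

/-- If the Morita defect `C̄' = C/Ce'C` vanishes (so `B = e'Ce'` and `C`
are Morita equivalent), then the grade of `C̄ = C/CeC` as a right `B`-module equals its
grade as a right `C`-module. -/
theorem grade_of_defect_over_B_eq_grade_over_C
    (C : Type) [Ring C] (e : C) [he : Fact (IsIdempotentElem e)]
    (hC' : Subsingleton (CBar (1 - e))) :
    rgrade (Hand (1 - e) (1 - e)) (CBar e) = rgrade C (CBar e) := by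
  obtain ⟨m, c, d, hcd⟩ := exists_sum_mul_mul_eq_of_mem_span
    ((cbarMk_eq_zero_iff (1 - e) 1).1 (Subsingleton.elim _ _))
  refine rgrade_congr fun n => ?_
  calc _ ↔ Subsingleton (Abelian.Ext (ModuleCat.of _ (CBar e))
        (ModuleCat.of (Hand (1 - e) (1 - e))ᵐᵒᵖ (Hand (1 : C) (1 - e))) n) :=
        subsingleton_ext_corner_iff hcd _ n
    _ ↔ _ := (subsingleton_ext_congr (cornerCBarIso e) (cornerSelfIso e) n).symm
    _ ↔ _ := (subsingleton_ext_iff_of_equivalence (moritaEquivalence e hcd) _ _ n).symm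

end MoritaHochschild
end
end

section
/- Let K be a commutative ring and (C,e) a Morita context such that C is a K-algebra, and set A = eCe. The comparison map χ*_{C/A} : Hoch*(C) → Hoch*(A) on Hochschild cohomology over K, induced by the semi-split inclusion of complexes of C-bimodules Ce ⊗_A 𝔹(A) ⊗_A eC ↪ 𝔹(C) lifting the multiplication map μ_e : Ce ⊗_A eC → C, is a homomorphism of graded K-algebras with respect to the Gerstenhaber (Yoneda) products on source and target. -/
open CategoryTheory MulOpposite

attribute [local instance] HasDerivedCategory.standard
attribute [local instance] CategoryTheory.hasExt_of_hasDerivedCategory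

set_option maxHeartbeats 1000000
set_option synthInstance.maxHeartbeats 400000
set_option linter.unusedSectionVars false
set_option linter.unusedVariables false

noncomputable section
namespace MoritaHochschild

/-! ### Corners `pCq` of a ring with idempotents `p`, `q` -/

variable {C : Type} [Ring C]

/-! ### Hochschild cochains over a commutative base ring `K` (bar-complex description) -/

section HochschildCochains

/-- Merging of consecutive entries: given `a : Fin (n+1) → R` and `i : Fin n`, the
`n`-tuple `(a 0, …, a (i-1), a i * a (i+1), a (i+2), …, a n)`. -/
def mulConsec {R : Type} [Mul R] {n : ℕ} (a : Fin (n + 1) → R) (i : Fin n) :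
    Fin n → R :=
  fun j =>
    if j.1 < i.1 then a (Fin.castSucc j)
    else if j.1 = i.1 then a (Fin.castSucc j) * a j.succ
    else a j.succ

/-- The Hochschild coboundary of an (inhomogeneous) `n`-cochain `f` on `R` with values in
an `R`-bimodule `V`:
`(d f)(a₀, …, aₙ) = a₀ • f(a₁, …, aₙ) + ∑ᵢ (-1)^(i+1) f(a₀, …, aᵢ·aᵢ₊₁, …, aₙ)
  + (-1)^(n+1) f(a₀, …, a_{n-1}) • aₙ`. -/
def hd {R V : Type} [Ring R] [AddCommGroup V] [SMul R V] [SMul Rᵐᵒᵖ V] {n : ℕ}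
    (f : (Fin n → R) → V) : (Fin (n + 1) → R) → V :=
  fun a =>
    a 0 • f (Fin.tail a)
    + (Finset.univ.sum fun i : Fin n => ((-1 : ℤ) ^ (i.1 + 1)) • f (mulConsec a i))
    + ((-1 : ℤ) ^ (n + 1)) • ((MulOpposite.op (a (Fin.last n))) • f (Fin.init a))

/-- `K`-multilinearity of a raw cochain (so that multilinear cochains correspond to
`R^{ev}`-linear maps on the bar resolution `R^{⊗ K (n+2)}`). -/
def IsMultilinearCochain (K : Type) [CommRing K] {R V : Type} [Ring R] [Module K R]
    [AddCommGroup V] [Module K V] {n : ℕ} (f : (Fin n → R) → V) : Prop :=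
  (∀ (a : Fin n → R) (i : Fin n) (x y : R),
      f (Function.update a i (x + y)) = f (Function.update a i x) + f (Function.update a i y))
  ∧ (∀ (a : Fin n → R) (i : Fin n) (k : K) (x : R),
      f (Function.update a i (k • x)) = k • f (Function.update a i x))

/-- A cochain is a coboundary if it is `d` of a multilinear cochain
(in degree `0`, only the zero cochain is a coboundary). -/
def IsCoboundary (K : Type) [CommRing K] {R V : Type} [Ring R] [Module K R]
    [AddCommGroup V] [Module K V] [SMul R V] [SMul Rᵐᵒᵖ V] :
    ∀ {n : ℕ}, ((Fin n → R) → V) → Prop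
  | 0, u => u = 0
  | _ + 1, u => ∃ h, IsMultilinearCochain K h ∧ u = hd h

/-- The cup product of Hochschild cochains (with coefficients in the ring itself). -/
def cup {R : Type} [Ring R] {m n : ℕ} (f : (Fin m → R) → R) (g : (Fin n → R) → R) :
    (Fin (m + n) → R) → R :=
  fun a => f (fun i => a (Fin.castAdd n i)) * g (fun j => a (Fin.natAdd m j))

end HochschildCochains
section Chi

variable {K : Type} [CommRing K] [Algebra K C]

instance handSMulK {p q : C} : SMul K (Hand p q) :=
  ⟨fun k x => ⟨k • x.val, by rw [mul_smul_comm, smul_mul_assoc, x.prop]⟩⟩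

@[simp] lemma Hand.val_smulK {p q : C} (k : K) (x : Hand p q) :
    (k • x : Hand p q).val = k • x.val := rfl

instance handModuleK {p q : C} : Module K (Hand p q) :=
  Function.Injective.module K (Hand.valHom) Hand.val_injective (fun _ _ => rfl)

/-- The comparison map on Hochschild cochains: an `n`-cochain on `C` is compressed to an
`n`-cochain on the corner algebra `A = eCe`, by restricting the arguments to `A` and
compressing the value by `e·(-)·e`. This is the cochain-level description of the
comparison map `χ_{C/A} : Hoch(C) → Hoch(A)`. -/
def chiCochain (e : C) [Fact (IsIdempotentElem e)] {n : ℕ}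
    (f : (Fin n → C) → C) : (Fin n → Hand e e) → Hand e e :=
  fun a => Hand.compress e e (f (fun i => (a i).val))

end Chi


/-!
Restriction of cochains to `A = eCe` and compression `x ↦ exe` are maps of `A`-bimodules, so
`χ = e · (-)|_A · e` commutes with the Hochschild coboundary.

For cocycles `f`, `g` the defect `χ(f ∪ g) - χf ∪ χg` equals `e (F ∪ G) e`, where
`F = e f|_A (1 - e)` and `G = (1 - e) g|_A e` are `C`-valued cocycles on `A`. Left
multiplication by `A` kills the values of `G`, so contracting with the unit `e` of `A` gives
`G = -d(G(e, -))`; as `F` is a cocycle, the Leibniz rule turns this into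
`F ∪ G = (-1)^(m+1) d(F ∪ G(e, -))`. In degree `0` cocycles are central and `G` vanishes.
-/

section Tuples

variable {α β : Type}

theorem Fin.init_cons {n : ℕ} (x : α) (c : Fin (n + 1) → α) :
    Fin.init (Fin.cons x c : Fin (n + 2) → α) = Fin.cons x (Fin.init c) := by
  funext i
  cases i using Fin.cases <;> rfl

theorem mulConsec_comp [Mul α] [Mul β] {ψ : α → β} (hψ : ∀ x y, ψ (x * y) = ψ x * ψ y)
    {n : ℕ} (a : Fin (n + 1) → α) (i : Fin n) :
    mulConsec (ψ ∘ a) i = ψ ∘ mulConsec a i := by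
  funext j
  simp only [mulConsec, Function.comp_apply]
  split_ifs <;> simp [hψ]

theorem mulConsec_cons_one_zero [MulOneClass α] {n : ℕ} (c : Fin (n + 1) → α) :
    mulConsec (Fin.cons 1 c) 0 = c := by
  funext j
  cases j using Fin.cases <;> simp [mulConsec]

theorem mulConsec_cons_succ [Mul α] {n : ℕ} (x : α) (c : Fin (n + 1) → α) (i : Fin n) :
    mulConsec (Fin.cons x c) i.succ = Fin.cons x (mulConsec c i) := by
  funext j
  cases j using Fin.cases <;> simp [mulConsec]

variable [Mul α] {p q : ℕ} (a : Fin (p + q + 1) → α)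

theorem mulConsec_castAdd_castAdd (i : Fin p) :
    (fun k => mulConsec a (Fin.castAdd q i) (Fin.castAdd q k)) =
      mulConsec (fun k : Fin (p + 1) => a (Fin.castLE (by omega) k)) i := by
  funext k
  simp only [mulConsec, Fin.val_castAdd]
  split_ifs <;> rfl

theorem mulConsec_castAdd_natAdd (i : Fin p) :
    (fun k => mulConsec a (Fin.castAdd q i) (Fin.natAdd p k)) =
      Fin.tail (fun k : Fin (q + 1) => a (Fin.natAdd p k)) := by
  funext k
  simp only [mulConsec, Fin.val_castAdd, Fin.val_natAdd]
  rw [if_neg (by omega), if_neg (by omega)]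
  rfl

theorem mulConsec_natAdd_castAdd (j : Fin q) :
    (fun k => mulConsec a (Fin.natAdd p j) (Fin.castAdd q k)) =
      Fin.init (fun k : Fin (p + 1) => a (Fin.castLE (by omega) k)) := by
  funext k
  simp only [mulConsec, Fin.val_castAdd, Fin.val_natAdd]
  rw [if_pos (by omega)]
  rfl

theorem mulConsec_natAdd_natAdd (j : Fin q) :
    (fun k => mulConsec a (Fin.natAdd p j) (Fin.natAdd p k)) =
      mulConsec (fun k : Fin (q + 1) => a (Fin.natAdd p k)) j := by
  funext k
  simp only [mulConsec, Fin.val_natAdd, add_lt_add_iff_left, add_right_inj]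
  split_ifs <;> rfl

end Tuples

/-- The cup product of cochains on `R` with values in a ring `S`; `cup` is the case `S = R`. -/
def mulCup {R S : Type} [Mul S] {m n : ℕ} (f : (Fin m → R) → S) (g : (Fin n → R) → S) :
    (Fin (m + n) → R) → S :=
  fun a => f (fun i => a (Fin.castAdd n i)) * g (fun j => a (Fin.natAdd m j))

section Coboundary

variable {R V W : Type} [Ring R] [AddCommGroup V] [SMul R V] [SMul Rᵐᵒᵖ V]
  [AddCommGroup W] [SMul R W] [SMul Rᵐᵒᵖ W]

theorem hd_comp {F : Type} [FunLike F V W] [AddMonoidHomClass F V W] (φ : F)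
    (hl : ∀ (r : R) (v : V), φ (r • v) = r • φ v)
    (hr : ∀ (r : R) (v : V), φ (op r • v) = op r • φ v) {n : ℕ}
    (f : (Fin n → R) → V) : hd (φ ∘ f) = φ ∘ hd f := by
  funext a
  simp only [hd, Function.comp_apply, map_add, map_sum, map_zsmul, hl, hr]

theorem hd_precomp {R' : Type} [Ring R'] [SMul R' V] [SMul R'ᵐᵒᵖ V] {ψ : R' → R}
    (hψ : ∀ x y, ψ (x * y) = ψ x * ψ y) (hl : ∀ (r : R') (v : V), r • v = ψ r • v)
    (hr : ∀ (r : R') (v : V), op r • v = op (ψ r) • v) {n : ℕ} (f : (Fin n → R) → V) :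
    hd (fun a => f (ψ ∘ a)) = fun a => hd f (ψ ∘ a) := by
  funext a
  simp only [hd, hl, hr, mulConsec_comp hψ]
  rfl

theorem hd_cons_one {n : ℕ} (φ : (Fin (n + 1) → R) → V) (hφ : hd φ = 0)
    (hl : ∀ (r : R) c, r • φ c = 0) :
    hd (fun c => φ (Fin.cons 1 c)) = -φ := by
  funext c
  have h := congrFun hφ (Fin.cons 1 c)
  simp only [hd, Pi.zero_apply, Pi.neg_apply, hl, zero_add] at h ⊢
  rw [Fin.sum_univ_succ] at h
  simp only [mulConsec_cons_one_zero, mulConsec_cons_succ, Fin.cons_last, Fin.init_cons,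
    Fin.val_zero, Fin.val_succ] at h
  simp only [pow_succ, pow_zero, neg_smul, one_smul, mul_neg, mul_one, neg_neg,
    Finset.sum_neg_distrib] at h ⊢
  linear_combination (norm := abel) -h

/-- The Leibniz rule `d(f ∪ g) = df ∪ g + (-1)^p f ∪ dg`, in the case `df = 0`. -/
theorem hd_mulCup_of_hd_eq_zero {S : Type} [Ring S] [SMul R S] [SMul Rᵐᵒᵖ S]
    [IsScalarTower R S S] [SMulCommClass Rᵐᵒᵖ S S]
    (hbal : ∀ (r : R) (x y : S), (op r • x) * y = x * (r • y)) {p q : ℕ}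
    (f : (Fin p → R) → S) (g : (Fin q → R) → S) (hf : hd f = 0) :
    hd (mulCup f g) = (-1 : ℤ) ^ p • mulCup f (hd g) := by
  funext a
  simp only [hd, mulCup, Pi.smul_apply, Fin.sum_univ_add, mulConsec_castAdd_castAdd,
    mulConsec_castAdd_natAdd, mulConsec_natAdd_castAdd, mulConsec_natAdd_natAdd]
  set b : Fin (p + 1) → R := fun k => a (Fin.castLE (by omega) k)
  set c : Fin (q + 1) → R := fun k => a (Fin.natAdd p k)
  change b 0 • (f (Fin.tail b) * g (Fin.tail c)) + _ +
      (-1) ^ (p + q + 1) • op (c (Fin.last q)) • (f (Fin.init b) * g (Fin.init c)) =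
    (-1) ^ p • (f (Fin.init b) * (c 0 • g (Fin.tail c) + _ + _))
  have h := congrArg (· * g (Fin.tail c)) (congrFun hf b)
  simp only [hd, add_mul, Finset.sum_mul, smul_mul_assoc, hbal, Pi.zero_apply, zero_mul] at h
  change _ + _ + _ • (f (Fin.init b) * c 0 • g (Fin.tail c)) = 0 at h
  simp only [mul_add, Finset.mul_sum, mul_smul_comm, smul_add, Finset.smul_sum, smul_smul,
    Fin.val_castAdd, Fin.val_natAdd, ← pow_add, ← add_assoc]
  rw [pow_succ (-1 : ℤ) p, mul_neg_one, neg_smul] at h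
  linear_combination (norm := abel) h

theorem commute_of_hd_eq_zero {g : (Fin 0 → R) → R} (hg : hd g = 0) (x : R) (b : Fin 0 → R) :
    Commute x (g b) := by
  have h := congrFun hg fun _ => x
  simp only [hd, Finset.univ_eq_empty, Finset.sum_empty, add_zero, zero_add, pow_one, neg_smul,
    one_smul, smul_eq_mul, MulOpposite.smul_eq_mul_unop, unop_op, Pi.zero_apply,
    Subsingleton.elim _ b] at h
  exact add_neg_eq_zero.mp h

end Coboundary

namespace IsMultilinearCochain

variable {K : Type} [CommRing K] {R V W : Type} [Ring R] [Module K R] [AddCommGroup V]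
  [Module K V] [AddCommGroup W] [Module K W] {n : ℕ} {f : (Fin n → R) → V}

theorem zero : IsMultilinearCochain K (0 : (Fin n → R) → V) :=
  ⟨fun _ _ _ _ => (add_zero 0).symm, fun _ _ k _ => (smul_zero k).symm⟩

theorem linearMap_comp (φ : V →ₗ[K] W) (hf : IsMultilinearCochain K f) :
    IsMultilinearCochain K (φ ∘ f) :=
  ⟨fun a i x y => by simp only [Function.comp_apply, hf.1, map_add],
    fun a i k x => by simp only [Function.comp_apply, hf.2, map_smul]⟩

theorem comp_linearMap {R' : Type} [Ring R'] [Module K R'] (ψ : R' →ₗ[K] R)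
    (hf : IsMultilinearCochain K f) : IsMultilinearCochain K fun a => f (ψ ∘ a) :=
  ⟨fun a i x y => by simp only [Function.comp_update, map_add, hf.1],
    fun a i k x => by simp only [Function.comp_update, map_smul, hf.2]⟩

theorem cons (x : R) {f : (Fin (n + 1) → R) → V} (hf : IsMultilinearCochain K f) :
    IsMultilinearCochain K fun c : Fin n → R => f (Fin.cons x c) :=
  ⟨fun a i y z => by simp only [Fin.cons_update, hf.1],
    fun a i k y => by simp only [Fin.cons_update, hf.2]⟩

theorem mulCup {S : Type} [Ring S] [Algebra K S] {m : ℕ} {f : (Fin m → R) → S}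
    {g : (Fin n → R) → S} (hf : IsMultilinearCochain K f) (hg : IsMultilinearCochain K g) :
    IsMultilinearCochain K (mulCup f g) := by
  have hne (i : Fin m) (j : Fin n) : Fin.natAdd m j ≠ Fin.castAdd n i :=
    Fin.ne_of_val_ne (by simp only [Fin.val_natAdd, Fin.val_castAdd]; omega)
  have hcast := fun (a : Fin (m + n) → R) => Function.update_comp_eq_of_injective' a
    (Fin.castAdd_injective m n)
  have hnat := fun (a : Fin (m + n) → R) => Function.update_comp_eq_of_injective' a
    (Fin.natAdd_injective n m)
  constructor
  · intro a i x y
    induction i using Fin.addCases with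
    | left i =>
      simp only [_root_.MoritaHochschild.mulCup, hcast,
        Function.update_comp_eq_of_forall_ne' a _ (hne i), hf.1, add_mul]
    | right j =>
      simp only [_root_.MoritaHochschild.mulCup, hnat,
        Function.update_comp_eq_of_forall_ne' a _ (fun i => (hne i j).symm), hg.1, mul_add]
  · intro a i k x
    induction i using Fin.addCases with
    | left i =>
      simp only [_root_.MoritaHochschild.mulCup, hcast,
        Function.update_comp_eq_of_forall_ne' a _ (hne i), hf.2, smul_mul_assoc]
    | right j =>
      simp only [_root_.MoritaHochschild.mulCup, hnat,
        Function.update_comp_eq_of_forall_ne' a _ (fun i => (hne i j).symm), hg.2,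
        mul_smul_comm]

end IsMultilinearCochain

theorem isCoboundary_zero {K R : Type} [CommRing K] [Ring R] [Module K R] :
    ∀ {n : ℕ}, IsCoboundary K (0 : (Fin n → R) → R)
  | 0 => rfl
  | _ + 1 => ⟨0, .zero, by funext a; simp [hd]⟩

namespace Hand

variable {p q : C}

/-- `C` is a `pCp`-bimodule by multiplication. -/
instance instSMulCorner : SMul (Hand p p) C := ⟨fun a x => a.val * x⟩

instance instOpSMulCorner : SMul (Hand p p)ᵐᵒᵖ C := ⟨fun a x => x * a.unop.val⟩

theorem smul_def (a : Hand p p) (x : C) : a • x = a.val * x := rfl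

theorem op_smul_def (a : Hand p p) (x : C) : op a • x = x * a.val := rfl

instance : IsScalarTower (Hand p p) C C := ⟨fun a x y => mul_assoc a.val x y⟩

instance : SMulCommClass (Hand p p)ᵐᵒᵖ C C := ⟨fun a x y => mul_assoc x y a.unop.val⟩

theorem op_smul_mul (a : Hand p p) (x y : C) : (op a • x) * y = x * (a • y) :=
  mul_assoc x a.val y

variable (K : Type) [CommRing K] [Algebra K C]

def valₗ : Hand p q →ₗ[K] C where
  toFun := val
  map_add' _ _ := rfl
  map_smul' _ _ := rfl

def compressHom (p q : C) [Fact (IsIdempotentElem p)] [Fact (IsIdempotentElem q)] :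
    C →+ Hand p q where
  toFun := compress p q
  map_zero' := val_injective (by simp [val_compress])
  map_add' x y := val_injective (by simp [val_compress, mul_add, add_mul])

def compressₗ (p q : C) [Fact (IsIdempotentElem p)] [Fact (IsIdempotentElem q)] :
    C →ₗ[K] Hand p q where
  __ := compressHom p q
  map_smul' k x := val_injective (by simp [compressHom])

variable {K} {e : C} [Fact (IsIdempotentElem e)]

theorem compressₗ_apply (x : C) : compressₗ K e e x = compress e e x := rfl

theorem mul_one_sub (a : Hand e e) : a.val * (1 - e) = 0 := by
  rw [mul_sub, mul_one, right_absorb, sub_self]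

theorem one_sub_mul (a : Hand e e) : (1 - e) * a.val = 0 := by
  rw [sub_mul, one_mul, left_absorb, sub_self]

theorem commute_idem (a : Hand e e) : Commute e a.val := by
  rw [Commute, SemiconjBy, left_absorb, right_absorb]

theorem commute_one_sub_idem (a : Hand e e) : Commute (1 - e) a.val := by
  rw [Commute, SemiconjBy, mul_one_sub, one_sub_mul]

theorem compress_smul (a : Hand e e) (x : C) : compress e e (a • x) = a • compress e e x :=
  val_injective <| by
    simp only [val_compress, smul_def, smul_eq_mul, val_mul]
    rw [← mul_assoc, (commute_idem a).eq, mul_assoc, mul_assoc, mul_assoc]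

theorem compress_op_smul (a : Hand e e) (x : C) :
    compress e e (op a • x) = op a • compress e e x :=
  val_injective <| by
    simp only [val_compress, op_smul_def, val_op_smul, unop_op]
    rw [← mul_assoc, mul_assoc (e * x), right_absorb, mul_assoc (e * x) e, left_absorb]

end Hand

theorem IsIdempotentElem.mul_sub_mul {R : Type} [Ring R] {e : R} (he : IsIdempotentElem e)
    (x y : R) :
    e * (x * y) * e - e * x * e * (e * y * e) = e * (e * x * (1 - e) * ((1 - e) * y * e)) * e := by
  have hee (z : R) : e * (e * z) = e * z := by rw [← mul_assoc, he.eq]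
  simp only [mul_sub, sub_mul, mul_one, one_mul, mul_assoc, hee, he.eq]
  abel

section Comparison

variable {K : Type} [CommRing K] [Algebra K C] {e : C} [Fact (IsIdempotentElem e)] {m n : ℕ}

def restrictCorner (e : C) {n : ℕ} (f : (Fin n → C) → C) : (Fin n → Hand e e) → C :=
  fun a => f (Hand.val ∘ a)

theorem hd_restrictCorner (f : (Fin n → C) → C) :
    hd (restrictCorner e f) = restrictCorner e (hd f) :=
  hd_precomp (ψ := Hand.val) (fun _ _ => rfl) (fun _ _ => rfl) (fun _ _ => rfl) f

theorem IsMultilinearCochain.restrictCorner {f : (Fin n → C) → C}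
    (hf : IsMultilinearCochain K f) : IsMultilinearCochain K (restrictCorner e f) :=
  hf.comp_linearMap (Hand.valₗ K (p := e) (q := e))

theorem hd_mulLeftRight_comp {p q : C} (hp : ∀ a : Hand e e, Commute p a.val)
    (hq : ∀ a : Hand e e, Commute q a.val) (F : (Fin n → Hand e e) → C) :
    hd (LinearMap.mulLeftRight K (p, q) ∘ F) = LinearMap.mulLeftRight K (p, q) ∘ hd F :=
  hd_comp _
    (fun a x => by
      simp only [LinearMap.mulLeftRight_apply, Hand.smul_def, ← mul_assoc, (hp a).eq])
    (fun a x => by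
      simp only [LinearMap.mulLeftRight_apply, Hand.op_smul_def, mul_assoc, (hq a).eq])
    F

theorem hd_mulLeftRight_restrictCorner {p q : C} (hp : ∀ a : Hand e e, Commute p a.val)
    (hq : ∀ a : Hand e e, Commute q a.val) {f : (Fin n → C) → C} (hf : hd f = 0) :
    hd (LinearMap.mulLeftRight K (p, q) ∘ restrictCorner e f) = 0 := by
  rw [hd_mulLeftRight_comp hp hq, hd_restrictCorner, hf]
  exact funext fun _ => map_zero _

theorem chiCochain_cup_sub_cup (f : (Fin m → C) → C) (g : (Fin n → C) → C) :
    chiCochain e (cup f g) - cup (chiCochain e f) (chiCochain e g) =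
      Hand.compressHom e e ∘ mulCup (LinearMap.mulLeftRight K (e, 1 - e) ∘ restrictCorner e f)
        (LinearMap.mulLeftRight K (1 - e, e) ∘ restrictCorner e g) :=
  funext fun _ => Hand.val_injective (IsIdempotentElem.mul_sub_mul Fact.out _ _)

theorem isCoboundary_compressHom_mulCup {F : (Fin m → Hand e e) → C}
    {G : (Fin (n + 1) → Hand e e) → C} (hFm : IsMultilinearCochain K F)
    (hGm : IsMultilinearCochain K G) (hF : hd F = 0) (hG : hd G = 0)
    (hGl : ∀ (a : Hand e e) c, a • G c = 0) :
    IsCoboundary K (Hand.compressHom e e ∘ mulCup F G) := by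
  have hcup : hd (mulCup F fun c => G (Fin.cons 1 c)) = (-1 : ℤ) ^ (m + 1) • mulCup F G := by
    rw [hd_mulCup_of_hd_eq_zero Hand.op_smul_mul F _ hF, hd_cons_one G hG hGl]
    funext a
    simp only [mulCup, Pi.smul_apply, Pi.neg_apply, mul_neg, smul_neg, pow_succ, mul_one,
      neg_smul]
  refine ⟨((-1 : ℤ) ^ (m + 1) • Hand.compressₗ K e e) ∘
      mulCup F fun c => G (Fin.cons 1 c),
    (hFm.mulCup (hGm.cons 1)).linearMap_comp _, ?_⟩
  rw [hd_comp _
    (fun a x => by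
      simp only [LinearMap.smul_apply, Hand.compressₗ_apply, Hand.compress_smul]
      exact smul_comm _ _ _)
    (fun a x => by
      simp only [LinearMap.smul_apply, Hand.compressₗ_apply, Hand.compress_op_smul]
      exact smul_comm _ _ _), hcup]
  funext a
  simp only [Function.comp_apply, Pi.smul_apply, LinearMap.smul_apply, map_zsmul, smul_smul,
    ← pow_add, Even.neg_one_pow ⟨m + 1, rfl⟩, one_smul]
  rfl

theorem isCoboundary_chiCochain_cup_sub {f : (Fin m → C) → C} {g : (Fin n → C) → C}
    (hf : IsMultilinearCochain K f) (hg : IsMultilinearCochain K g) (hdf : hd f = 0)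
    (hdg : hd g = 0) :
    IsCoboundary K (chiCochain e (cup f g) - cup (chiCochain e f) (chiCochain e g)) := by
  rw [chiCochain_cup_sub_cup (K := K)]
  cases n with
  | zero =>
    have hG : LinearMap.mulLeftRight K (1 - e, e) ∘ restrictCorner e g = 0 := funext fun b => by
      change (1 - e) * g (Hand.val ∘ b) * e = 0
      rw [(commute_of_hd_eq_zero hdg _ _).eq, mul_assoc, sub_mul, one_mul,
        (Fact.out : IsIdempotentElem e).eq, sub_self, mul_zero]
    rw [hG, show Hand.compressHom e e ∘ mulCup _ 0 = 0 from funext fun a => by simp [mulCup]]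
    exact isCoboundary_zero
  | succ n =>
    exact isCoboundary_compressHom_mulCup (hf.restrictCorner.linearMap_comp _)
      (hg.restrictCorner.linearMap_comp _)
      (hd_mulLeftRight_restrictCorner Hand.commute_idem Hand.commute_one_sub_idem hdf)
      (hd_mulLeftRight_restrictCorner Hand.commute_one_sub_idem Hand.commute_idem hdg)
      (fun a c => by simp [Hand.smul_def, ← mul_assoc, Hand.mul_one_sub])

theorem IsMultilinearCochain.chiCochain {f : (Fin n → C) → C} (hf : IsMultilinearCochain K f) :
    IsMultilinearCochain K (chiCochain e f) :=
  hf.restrictCorner.linearMap_comp (Hand.compressₗ K e e)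

theorem chiCochain_hd (f : (Fin n → C) → C) : chiCochain e (hd f) = hd (chiCochain e f) := by
  change _ = hd (Hand.compressHom e e ∘ restrictCorner e f)
  rw [hd_comp _ Hand.compress_smul Hand.compress_op_smul, hd_restrictCorner]
  rfl

theorem chiCochain_add (f g : (Fin n → C) → C) :
    chiCochain e (f + g) = chiCochain e f + chiCochain e g :=
  funext fun _ => map_add (Hand.compressHom e e) _ _

theorem chiCochain_smul (k : K) (f : (Fin n → C) → C) :
    chiCochain e (k • f) = k • chiCochain e f :=
  funext fun _ => map_smul (Hand.compressₗ K e e) k _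

theorem chiCochain_one : chiCochain e (fun _ : Fin 0 → C => (1 : C)) = fun _ => (1 : Hand e e) :=
  funext fun _ => Hand.val_injective <| by
    change e * 1 * e = e
    rw [mul_one]
    exact (Fact.out : IsIdempotentElem e).eq

end Comparison

/-- For a Morita context `(C, e)` over a commutative ring `K`, with
`A = eCe`, the comparison map `χ_{C/A} : Hoch(C) → Hoch(A)` on Hochschild cochains
(restriction of arguments to `A` together with compression `e·(-)·e` of values, which is
the cochain-level form of the map induced by `Ce ⊗_A 𝔹(A) ⊗_A eC ↪ 𝔹(C)`) is a
homomorphism of graded `K`-algebras: it is a `K`-linear chain map, preserves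
multilinearity, sends the unit cocycle to the unit cocycle, and is multiplicative with
respect to the Gerstenhaber (cup/Yoneda) product, up to coboundaries. -/
theorem comparison_map_is_graded_algebra_homomorphism
    (K : Type) [CommRing K] (C : Type) [Ring C] [Algebra K C]
    (e : C) [Fact (IsIdempotentElem e)] :
    -- χ preserves multilinear cochains
    (∀ (n : ℕ) (f : (Fin n → C) → C), IsMultilinearCochain K f →
        IsMultilinearCochain K (chiCochain e f))
    -- χ is a map of complexes
    ∧ (∀ (n : ℕ) (f : (Fin n → C) → C), IsMultilinearCochain K f →
        chiCochain e (hd f) = hd (chiCochain e f))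
    -- χ is additive and K-linear
    ∧ (∀ (n : ℕ) (f g : (Fin n → C) → C),
        chiCochain e (f + g) = chiCochain e f + chiCochain e g)
    ∧ (∀ (n : ℕ) (k : K) (f : (Fin n → C) → C),
        chiCochain e (k • f) = k • chiCochain e f)
    -- χ sends the unit of `Hoch^0(C)` to the unit of `Hoch^0(A)`
    ∧ (chiCochain e (fun _ : Fin 0 → C => (1 : C)) = fun _ => (1 : Hand e e))
    -- on cocycles, χ is multiplicative up to coboundaries
    ∧ (∀ (m n : ℕ) (f : (Fin m → C) → C) (g : (Fin n → C) → C),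
        IsMultilinearCochain K f → IsMultilinearCochain K g →
        hd f = 0 → hd g = 0 →
        IsCoboundary K
          (chiCochain e (cup f g) - cup (chiCochain e f) (chiCochain e g))) :=
  ⟨fun _ _ hf => hf.chiCochain, fun _ f _ => chiCochain_hd f, fun _ => chiCochain_add,
    fun _ => chiCochain_smul, chiCochain_one,
    fun _ _ _ _ hf hg hdf hdg => isCoboundary_chiCochain_cup_sub hf hg hdf hdg⟩

end MoritaHochschild
end
end
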